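/- The cascade generated by an invertible affine self-map φ(x) = Ax + b of 𝕋^d (with det A = ±1) is tame if and only if A^m = I for some positive integer m. -/

import Mathlib

/-!
Write `e ^ n = affApply (A ^ n) cₙ`, which for negative `n` needs `A ∈ GL_d(ℤ)`. If `A` has finite
order, the linear parts of the cascade lie in a finite set and the translation parts in the compact
torus, so every sequence in the cascade has a subsequence along which both converge. If `A` has
infinite order, its powers are pairwise distinct integer matrices, so some entry `(A ^ n) i j` is
unbounded. Along a subsequence these entries grow at least fivefold at each step, and nested
intervals produce an angle `t` such that `(A ^ n) i j • t` is alternately close to `0` and to `π`;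
then no subsequence of `e ^ n` converges at the point `Pi.single j t`.
-/

open Filter Topology

noncomputable def affApply {d : ℕ} (A : Matrix (Fin d) (Fin d) ℤ)
    (b : Fin d → AddCircle (2 * Real.pi)) (x : Fin d → AddCircle (2 * Real.pi)) :
    Fin d → AddCircle (2 * Real.pi) :=
  fun i => (∑ j, A i j • x j) + b i

open Set

namespace AddCircle

variable {p : ℝ}

theorem norm_coe_sub_int_mul_period (x : ℝ) (N : ℤ) :
    ‖((x - N * p : ℝ) : AddCircle p)‖ = ‖(x : AddCircle p)‖ := by
  rw [← zsmul_eq_mul, coe_sub, coe_zsmul, coe_period, smul_zero, sub_zero]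

theorem exists_Icc_norm_coe_mul_sub_le (hp : 0 < p) {c : ℝ} (hc : 0 < c) (s a L : ℝ)
    (hL : 5 * p / 4 ≤ c * L) :
    ∃ a', a ≤ a' ∧ a' + p / (4 * c) ≤ a + L ∧
      ∀ t ∈ Icc a' (a' + p / (4 * c)), ‖((c * t - s : ℝ) : AddCircle p)‖ ≤ p / 8 := by
  set N : ℤ := ⌈(c * a - s + p / 8) / p⌉
  have hN₁ : c * a - s + p / 8 ≤ N * p := (div_le_iff₀ hp).1 (Int.le_ceil _)
  have hN₂ : N * p < c * a - s + p / 8 + p := by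
    have := Int.ceil_lt_add_one ((c * a - s + p / 8) / p)
    rwa [← lt_div_iff₀ hp, add_div, div_self hp.ne']
  set a' := (s - p / 8 + N * p) / c
  have ha' : c * a' = s - p / 8 + N * p := mul_div_cancel₀ _ hc.ne'
  have hend : c * (a' + p / (4 * c)) = c * a' + p / 4 := by field_simp
  refine ⟨a', ?_, ?_, fun t ⟨ht₁, ht₂⟩ => ?_⟩
  · exact le_of_mul_le_mul_left (by linarith) hc
  · exact le_of_mul_le_mul_left (by rw [hend]; linarith) hc
  · have h₁ := mul_le_mul_of_nonneg_left ht₁ hc.le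
    have h₂ := mul_le_mul_of_nonneg_left ht₂ hc.le
    rw [← norm_coe_sub_int_mul_period _ N]
    refine QuotientAddGroup.norm_mk_le_norm.trans (abs_le.2 ⟨?_, ?_⟩) <;> linarith

theorem exists_forall_norm_coe_mul_sub_le (hp : 0 < p) {c : ℕ → ℝ} (hc₀ : 0 < c 0)
    (hc : ∀ l, 5 * c l ≤ c (l + 1)) (s : ℕ → ℝ) :
    ∃ t : ℝ, ∀ l, ‖((c l * t - s l : ℝ) : AddCircle p)‖ ≤ p / 8 := by
  have hpos : ∀ l, 0 < c l := fun l => by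
    induction l with
    | zero => exact hc₀
    | succ l ih => linarith [hc l]
  set δ : ℕ → ℝ := fun l => p / (4 * c l)
  have hδ : ∀ l, 5 * p / 4 ≤ c (l + 1) * δ l := fun l => by
    have := hpos l
    rw [← mul_div_assoc, le_div_iff₀ (by positivity)]
    nlinarith [hc l]
  obtain ⟨a₀, -, -, ha₀⟩ := exists_Icc_norm_coe_mul_sub_le hp hc₀ (s 0) 0 (5 * p / (4 * c 0))
    (le_of_eq (by field_simp))
  choose next hnext_ge hnext_le hnext using fun l a =>
    exists_Icc_norm_coe_mul_sub_le hp (hpos (l + 1)) (s (l + 1)) a (δ l) (hδ l)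
  set a : ℕ → ℝ := fun l => Nat.rec a₀ next l
  have ht := Monotone.ciSup_mem_iInter_Icc_of_antitone (f := a) (g := a + δ)
    (monotone_nat_of_le_succ fun l => hnext_ge l (a l))
    (antitone_nat_of_succ_le fun l => hnext_le l (a l))
    (fun l => le_add_of_nonneg_right (by have := hpos l; positivity))
  refine ⟨⨆ l, a l, fun l => ?_⟩
  cases l with
  | zero => exact ha₀ _ (mem_iInter.1 ht 0)
  | succ l => exact hnext l (a l) _ (mem_iInter.1 ht (l + 1))

end AddCircle

/-- The ratio `5` is what the nested intervals need: `t ↦ |c (l + 1)| * t` maps a window of length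
`p / (4 |c l|)` onto an interval of length at least `5 p / 4`, which contains a target arc of
length `p / 4` modulo `p`. -/
def IsLacunary (c : ℕ → ℤ) : Prop :=
  c 0 ≠ 0 ∧ ∀ l, 5 * |c l| ≤ |c (l + 1)|

theorem IsLacunary.comp_strictMono {c : ℕ → ℤ} (hc : IsLacunary c) {k : ℕ → ℕ}
    (hk : StrictMono k) : IsLacunary (c ∘ k) := by
  have hmono : Monotone fun l => |c l| :=
    monotone_nat_of_le_succ fun l => by linarith [hc.2 l, abs_nonneg (c l)]
  refine ⟨fun h => hc.1 ?_, fun l => ?_⟩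
  · simpa [show c (k 0) = 0 from h] using hmono (Nat.zero_le (k 0))
  · exact (hc.2 (k l)).trans (hmono (hk (Nat.lt_succ_self l)))

theorem exists_isLacunary_comp {ι : Type*} {f : ι → ℤ} (hf : ∀ C, ∃ i, C < |f i|) :
    ∃ ν : ℕ → ι, IsLacunary (f ∘ ν) := by
  choose g hg using hf
  refine ⟨fun l => Nat.rec (g 0) (fun _ i => g (5 * |f i|)) l, ?_, fun l => (hg _).le⟩
  exact abs_pos.1 (hg 0)

theorem AddCircle.exists_forall_not_tendsto_zsmul {p : ℝ} (hp : 0 < p) {c : ℕ → ℤ}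
    (hc : IsLacunary c) : ∃ t : AddCircle p, ∀ L, ¬Tendsto (fun l => c l • t) atTop (𝓝 L) := by
  set s : ℕ → ℝ := fun l => if Even l then 0 else p / 2
  obtain ⟨t, ht⟩ := AddCircle.exists_forall_norm_coe_mul_sub_le hp (c := fun l => (|c l| : ℝ))
    (s := s) (by exact_mod_cast abs_pos.2 hc.1) (fun l => by exact_mod_cast hc.2 l)
  have hnear : ∀ l, ‖|c l| • (t : AddCircle p) - (s l : AddCircle p)‖ ≤ p / 8 := fun l => by
    simpa [← AddCircle.coe_zsmul] using ht l
  have heven : ∀ l, ‖c (2 * l) • (t : AddCircle p)‖ ≤ p / 8 := fun l => by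
    simpa [s] using hnear (2 * l)
  have hodd : ∀ l, 3 * p / 8 ≤ ‖c (2 * l + 1) • (t : AddCircle p)‖ := fun l => by
    have h := norm_sub_norm_le ((p / 2 : ℝ) : AddCircle p) (|c (2 * l + 1)| • (t : AddCircle p))
    rw [norm_abs_zsmul, AddCircle.norm_half_period_eq, norm_sub_rev] at h
    have := hnear (2 * l + 1)
    simp only [s, Nat.not_even_two_mul_add_one, if_false] at this
    linarith [abs_of_pos hp]
  refine ⟨t, fun L hL => ?_⟩
  have hnorm := hL.norm
  have h₁ : ‖L‖ ≤ p / 8 :=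
    le_of_tendsto' (hnorm.comp (tendsto_atTop_atTop.2 fun b => ⟨b, fun l hl => by omega⟩)) heven
  have h₂ : 3 * p / 8 ≤ ‖L‖ :=
    ge_of_tendsto' (hnorm.comp (tendsto_atTop_atTop.2 fun b => ⟨b, fun l hl => by omega⟩)) hodd
  linarith

theorem Matrix.exists_forall_lt_abs_of_injective {ι m n : Type*} [Infinite ι] [Finite m]
    [Finite n] {M : ι → Matrix m n ℤ} (hM : Function.Injective M) :
    ∃ i j, ∀ C : ℤ, ∃ k, C < |M k i j| := by
  by_contra! h
  choose C hC using h
  refine Set.infinite_range_of_injective hM (Set.Finite.subset (Set.Finite.pi fun i =>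
    Set.Finite.pi fun j => Set.finite_Icc (-C i j) (C i j)) ?_)
  rintro _ ⟨k, rfl⟩ i - j -
  exact abs_le.1 (hC i j k)

section Affine

variable {d : ℕ}

local notation "𝕋" => Fin d → AddCircle (2 * Real.pi)

theorem affApply_comp (A B : Matrix (Fin d) (Fin d) ℤ) (b c x : 𝕋) :
    affApply A b (affApply B c x) = affApply (A * B) (affApply A b c) x := by
  funext i
  simp only [affApply, smul_add, Finset.sum_add_distrib, Finset.smul_sum, smul_smul,
    Matrix.mul_apply, Finset.sum_smul]
  rw [Finset.sum_comm]
  abel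

theorem affApply_one (c x : 𝕋) : affApply 1 c x = x + c := by
  funext i
  simp [affApply, Matrix.one_apply, ite_smul]

theorem affApply_zero (A : Matrix (Fin d) (Fin d) ℤ) (b : 𝕋) : affApply A b 0 = b := by
  funext i
  simp [affApply]

theorem exists_zpow_eq_affApply (u : (Matrix (Fin d) (Fin d) ℤ)ˣ) (b : 𝕋) (e : Equiv.Perm 𝕋)
    (he : ∀ x, e x = affApply u b x) (z : ℤ) :
    ∃ c, ∀ x, (e ^ z) x = affApply ↑(u ^ z) c x := by
  have he_inv : ∀ x, e⁻¹ x = affApply ↑u⁻¹ (affApply ↑u⁻¹ 0 (-b)) x := fun x => by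
    rw [Equiv.Perm.inv_eq_iff_eq, he, affApply_comp, affApply_comp, affApply_zero, Units.mul_inv,
      affApply_one, affApply_one, neg_add_cancel, add_zero]
  induction z using Int.induction_on with
  | zero => exact ⟨0, fun x => by simp [affApply_one]⟩
  | succ z ih =>
    obtain ⟨c, hc⟩ := ih
    refine ⟨affApply ↑(u ^ (z : ℤ)) c b, fun x => ?_⟩
    rw [zpow_add_one, Equiv.Perm.mul_apply, hc, he, affApply_comp, zpow_add_one, Units.val_mul]
  | pred z ih =>
    obtain ⟨c, hc⟩ := ih
    refine ⟨affApply ↑(u ^ (-(z : ℤ))) c (affApply ↑u⁻¹ 0 (-b)), fun x => ?_⟩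
    rw [zpow_sub_one, Equiv.Perm.mul_apply, hc, he_inv, affApply_comp, zpow_sub_one,
      Units.val_mul]

theorem tendsto_entry_smul_of_tendsto_affApply {ι : Type*} {F : Filter ι}
    {M : ι → Matrix (Fin d) (Fin d) ℤ} {c : ι → 𝕋}
    (h : ∀ x, ∃ L, Tendsto (fun k => affApply (M k) (c k) x) F (𝓝 L)) (i j : Fin d)
    (t : AddCircle (2 * Real.pi)) : ∃ L, Tendsto (fun k => M k i j • t) F (𝓝 L) := by
  obtain ⟨L, hL⟩ := h (Pi.single j t)
  obtain ⟨L₀, hL₀⟩ := h 0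
  refine ⟨L i - L₀ i, ((tendsto_pi_nhds.1 hL i).sub (tendsto_pi_nhds.1 hL₀ i)).congr fun k => ?_⟩
  simp [affApply, Pi.single_apply]

theorem continuous_affApply_prod (x : 𝕋) :
    Continuous fun q : Matrix (Fin d) (Fin d) ℤ × 𝕋 => affApply q.1 q.2 x := by
  unfold affApply
  fun_prop

instance : Fact (0 < 2 * Real.pi) := ⟨Real.two_pi_pos⟩

theorem exists_subseq_tendsto_affApply {S : Set (Matrix (Fin d) (Fin d) ℤ)} (hS : S.Finite)
    {M : ℕ → Matrix (Fin d) (Fin d) ℤ} (hM : ∀ k, M k ∈ S) (c : ℕ → 𝕋) :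
    ∃ φ : ℕ → ℕ, StrictMono φ ∧ ∃ M₀ c₀, ∀ x,
      Tendsto (fun k => affApply (M (φ k)) (c (φ k)) x) atTop (𝓝 (affApply M₀ c₀ x)) := by
  obtain ⟨⟨M₀, c₀⟩, -, φ, hφ, hlim⟩ := (hS.isCompact.prod isCompact_univ).tendsto_subseq
    (x := fun k => (M k, c k)) fun k => ⟨hM k, mem_univ _⟩
  refine ⟨φ, hφ, M₀, c₀, fun x => ?_⟩
  have hx := ((continuous_affApply_prod x).tendsto (M₀, c₀)).comp hlim
  exact hx

end Affine

theorem stmt8 {d : ℕ} (A : Matrix (Fin d) (Fin d) ℤ)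
    (b : Fin d → AddCircle (2 * Real.pi))
    (hdet : A.det = 1 ∨ A.det = -1)
    (e : Equiv.Perm (Fin d → AddCircle (2 * Real.pi)))
    (he : ∀ x, e x = affApply A b x) :
    (∀ n : ℕ → ℤ, ∃ k : ℕ → ℕ, StrictMono k ∧
        ∀ x, ∃ L, Tendsto (fun i => (e ^ (n (k i))) x) atTop (𝓝 L)) ↔
      ∃ m : ℕ, 0 < m ∧ A ^ m = 1 := by
  obtain ⟨u, rfl⟩ : IsUnit A := (Matrix.isUnit_iff_isUnit_det A).2 (Int.isUnit_iff.2 hdet)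
  choose c hc using exists_zpow_eq_affApply u b e he
  have hfin : (∃ m, 0 < m ∧ (u : Matrix (Fin d) (Fin d) ℤ) ^ m = 1) ↔ IsOfFinOrder u := by
    simp [isOfFinOrder_iff_pow_eq_one, ← Units.val_pow_eq_pow_val, Units.val_eq_one]
  rw [hfin]
  constructor
  · intro htame
    by_contra hu
    obtain ⟨i, j, hij⟩ := Matrix.exists_forall_lt_abs_of_injective
      (Units.val_injective.comp (injective_pow_iff_not_isOfFinOrder.2 hu))
    obtain ⟨ν, hν⟩ := exists_isLacunary_comp hij
    obtain ⟨k, hk, hconv⟩ := htame fun l => ν l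
    obtain ⟨t, ht⟩ :=
      AddCircle.exists_forall_not_tendsto_zsmul Real.two_pi_pos (hν.comp_strictMono hk)
    obtain ⟨L, hL⟩ := tendsto_entry_smul_of_tendsto_affApply
      (M := fun l => ↑(u ^ (ν (k l) : ℤ))) (c := fun l => c (ν (k l)))
      (fun x => by simpa only [hc] using hconv x) i j t
    exact ht L (by simpa using hL)
  · intro hu n
    obtain ⟨k, hk, M₀, c₀, h⟩ := exists_subseq_tendsto_affApply (hu.finite_zpowers.image Units.val)
      (M := fun l => ↑(u ^ n l)) (fun l => ⟨_, ⟨n l, rfl⟩, rfl⟩) (fun l => c (n l))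
    exact ⟨k, hk, fun x => ⟨_, by simpa [hc] using h x⟩⟩
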